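/- arXiv:2104.13181 — 2 statements merged into one kernel-verified Lean document; each statement's English description precedes it below -/
import Mathlib

section
/- Let d ≥ 1 and let (gₙ), (kₙ), (aₙ), (lₙ) be sequences of real d×d matrices such that for every n: gₙ = kₙ·aₙ·lₙ, the matrices kₙ and lₙ are orthogonal, and aₙ is diagonal with nonincreasing nonnegative diagonal entries aₙ(0,0) ≥ aₙ(1,1) ≥ … ≥ aₙ(d−1,d−1) ≥ 0 and aₙ ≠ 0. Assume that gₙ/‖gₙ‖ converges to a matrix π of rank one, and let v be a unit vector spanning the column space (range) of π. Then: (i) aₙ/‖aₙ‖ converges to the matrix E₀₀ whose (0,0) entry is 1 and all other entries are 0; (ii) |⟨kₙ·e₀, v⟩| → 1 as n → ∞, where e₀ is the first standard basis vector of ℝᵈ and ⟨·,·⟩ is the standard inner product. -/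
/-!
Put `bₙ = aₙ/‖aₙ‖` and move `π` into the frame of `kₙ, lₙ`: since the range of `π` is spanned
by `v`, `π = v wᵀ`, and `Mₙ = kₙᵀ π lₙᵀ = uₙ zₙᵀ` with `uₙ = kₙᵀ v`, `zₙ = lₙ w` unit vectors.
By orthogonal invariance of the Frobenius norm, `‖bₙ - Mₙ‖ = ‖gₙ/‖gₙ‖ - π‖ → 0`.

For a diagonal `b` whose largest entry in absolute value is `b₀₀`, the closest unit rank-one
matrix to `b` is `E₀₀`: `‖b - u zᵀ‖² = ‖b‖² - 2 uᵀ b z + 1`, and `uᵀ b z ≤ b₀₀` because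
`|uᵢ zᵢ| ≤ (uᵢ² + zᵢ²)/2`. Hence `‖bₙ - E₀₀‖ ≤ ‖bₙ - Mₙ‖ → 0`, so also `Mₙ → E₀₀`, and the
entry `(uₙ)₀ (zₙ)₀ → 1` squeezes `|(uₙ)₀| = |⟨kₙ e₀, v⟩|` to `1`.
-/

open Filter Topology Matrix

noncomputable def frobNorm {d : ℕ} (M : Matrix (Fin d) (Fin d) ℝ) : ℝ :=
  Real.sqrt (∑ i, ∑ j, (M i j) ^ 2)

open scoped Matrix.Norms.Frobenius

namespace Matrix

theorem exists_eq_vecMulVec_of_range_mulVecLin_eq_span {m n R : Type*} [Fintype n]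
    [CommSemiring R] {π : Matrix m n R} {v : m → R}
    (h : LinearMap.range π.mulVecLin = Submodule.span R {v}) :
    ∃ w, π = vecMulVec v w := by
  have hcol : ∀ j, ∃ c : R, c • v = π.col j := fun j =>
    Submodule.mem_span_singleton.mp (h ▸ range_mulVecLin π ▸ Submodule.subset_span ⟨j, rfl⟩)
  choose w hw using hcol
  refine ⟨w, Matrix.ext fun i j => ?_⟩
  rw [vecMulVec_apply, ← col_apply π j i, ← hw j, Pi.smul_apply, smul_eq_mul, mul_comm]

variable {m n : Type*} [Fintype m] [Fintype n]

theorem frobenius_norm_sq_eq_sum (A : Matrix m n ℝ) : ‖A‖ ^ 2 = ∑ i, ∑ j, A i j ^ 2 := by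
  rw [frobenius_norm_def, ← Real.rpow_natCast, ← Real.rpow_mul (by positivity)]
  norm_num

theorem frobenius_norm_sq_eq_trace (A : Matrix m n ℝ) : ‖A‖ ^ 2 = (Aᵀ * A).trace := by
  rw [frobenius_norm_sq_eq_sum, Finset.sum_comm]
  simp only [trace, diag_apply, mul_apply, transpose_apply, sq]

theorem frobenius_norm_mul_mul_of_orthogonal [DecidableEq m] [DecidableEq n]
    {k : Matrix m m ℝ} {l : Matrix n n ℝ} (hk : kᵀ * k = 1) (hl : lᵀ * l = 1)
    (A : Matrix m n ℝ) : ‖k * A * l‖ = ‖A‖ := by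
  rw [← sq_eq_sq₀ (norm_nonneg _) (norm_nonneg _), frobenius_norm_sq_eq_trace,
    frobenius_norm_sq_eq_trace]
  calc ((k * A * l)ᵀ * (k * A * l)).trace = (lᵀ * (Aᵀ * A) * l).trace := by
        simp only [transpose_mul, Matrix.mul_assoc]
        rw [← Matrix.mul_assoc kᵀ, hk, Matrix.one_mul]
    _ = (Aᵀ * A).trace := by
        rw [trace_mul_cycle, mul_eq_one_comm.mp hl, Matrix.one_mul]

theorem frobenius_norm_sub_vecMulVec_sq (A : Matrix m n ℝ) (u : m → ℝ) (z : n → ℝ) :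
    ‖A - vecMulVec u z‖ ^ 2 = ‖A‖ ^ 2 - 2 * (u ⬝ᵥ A *ᵥ z) + (u ⬝ᵥ u) * (z ⬝ᵥ z) := by
  rw [frobenius_norm_sq_eq_sum, frobenius_norm_sq_eq_sum, dotProduct, dotProduct, dotProduct,
    Finset.sum_mul_sum]
  simp only [mulVec, dotProduct, Finset.mul_sum, ← Finset.sum_sub_distrib, ← Finset.sum_add_distrib]
  exact Finset.sum_congr rfl fun i _ => Finset.sum_congr rfl fun j _ => by
    rw [sub_apply, vecMulVec_apply]; ring

theorem dotProduct_mulVec_le_of_isDiag {b : Matrix n n ℝ} (hb : b.IsDiag) {i₀ : n}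
    (hmax : ∀ i, |b i i| ≤ b i₀ i₀) {u z : n → ℝ} (hu : u ⬝ᵥ u = 1) (hz : z ⬝ᵥ z = 1) :
    u ⬝ᵥ b *ᵥ z ≤ b i₀ i₀ := by
  classical
  have hterm : ∀ i, u i * (b i i * z i) ≤ b i₀ i₀ * ((u i * u i + z i * z i) / 2) := by
    intro i
    calc u i * (b i i * z i) ≤ |b i i| * (|u i| * |z i|) := by
          rw [← abs_mul, ← abs_mul]; exact (le_abs_self _).trans_eq (by ring_nf)
      _ ≤ b i₀ i₀ * ((u i * u i + z i * z i) / 2) := by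
          gcongr
          · exact (abs_nonneg _).trans (hmax i₀)
          · exact hmax i
          · nlinarith [sq_abs (u i), sq_abs (z i), two_mul_le_add_sq |u i| |z i|]
  calc u ⬝ᵥ b *ᵥ z = ∑ i, u i * (b i i * z i) := by
        conv_lhs => rw [← hb.diagonal_diag]
        simp only [dotProduct, mulVec_diagonal, diag_apply]
    _ ≤ ∑ i, b i₀ i₀ * ((u i * u i + z i * z i) / 2) := Finset.sum_le_sum fun i _ => hterm i
    _ = b i₀ i₀ := by
        rw [← Finset.mul_sum, ← Finset.sum_div, Finset.sum_add_distrib]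
        simp only [dotProduct] at hu hz
        rw [hu, hz]; ring

theorem norm_sub_single_le_norm_sub_vecMulVec [DecidableEq n] {b : Matrix n n ℝ} (hb : b.IsDiag)
    {i₀ : n} (hmax : ∀ i, |b i i| ≤ b i₀ i₀) {u z : n → ℝ} (hu : u ⬝ᵥ u = 1)
    (hz : z ⬝ᵥ z = 1) : ‖b - single i₀ i₀ 1‖ ≤ ‖b - vecMulVec u z‖ := by
  rw [← sq_le_sq₀ (norm_nonneg _) (norm_nonneg _), single_eq_single_vecMulVec_single,
    frobenius_norm_sub_vecMulVec_sq, frobenius_norm_sub_vecMulVec_sq, hu, hz]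
  simp only [mulVec_single_one, single_dotProduct, one_mul, col_apply, Pi.single_eq_same, mul_one]
  linarith [dotProduct_mulVec_le_of_isDiag hb hmax hu hz]

theorem mul_vecMulVec_mul {R : Type*} [CommSemiring R] (k : Matrix m m R) (x : m → R)
    (y : n → R) (l : Matrix n n R) : k * vecMulVec x y * l = vecMulVec (k *ᵥ x) (lᵀ *ᵥ y) := by
  rw [mul_vecMulVec, vecMulVec_mul, mulVec_transpose]

theorem mulVec_dotProduct_mulVec_self_of_orthogonal {R : Type*} [CommSemiring R]
    [DecidableEq n] {A : Matrix m n R} (hA : Aᵀ * A = 1) (x : n → R) :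
    (A *ᵥ x) ⬝ᵥ (A *ᵥ x) = x ⬝ᵥ x := by
  rw [dotProduct_mulVec, ← mulVec_transpose, mulVec_mulVec, hA, one_mulVec]

theorem abs_le_one_of_dotProduct_self_eq_one {u : n → ℝ} (hu : u ⬝ᵥ u = 1) (i : n) :
    |u i| ≤ 1 := by
  rw [← sq_le_one_iff_abs_le_one, ← hu, dotProduct, sq]
  exact Finset.single_le_sum (f := fun j => u j * u j) (fun j _ => mul_self_nonneg _)
    (Finset.mem_univ i)

theorem tendsto_single_of_tendsto_norm_sub_vecMulVec [DecidableEq n] {α : Type*} {f : Filter α}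
    {b : α → Matrix n n ℝ} {u z : α → n → ℝ} {i₀ : n} (hb : ∀ t, (b t).IsDiag)
    (hmax : ∀ t i, |b t i i| ≤ b t i₀ i₀) (hu : ∀ t, u t ⬝ᵥ u t = 1) (hz : ∀ t, z t ⬝ᵥ z t = 1)
    (hlim : Tendsto (fun t => ‖b t - vecMulVec (u t) (z t)‖) f (𝓝 0)) :
    Tendsto b f (𝓝 (single i₀ i₀ 1)) ∧ Tendsto (fun t => |u t i₀|) f (𝓝 1) := by
  have hb_lim : Tendsto b f (𝓝 (single i₀ i₀ 1)) :=
    tendsto_iff_norm_sub_tendsto_zero.mpr <| squeeze_zero (fun _ => norm_nonneg _)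
      (fun t => norm_sub_single_le_norm_sub_vecMulVec (hb t) (hmax t) (hu t) (hz t)) hlim
  have hM_lim : Tendsto (fun t => vecMulVec (u t) (z t)) f (𝓝 (single i₀ i₀ 1)) := by
    have hdiff : Tendsto (fun t => b t - vecMulVec (u t) (z t)) f (𝓝 0) :=
      tendsto_iff_norm_sub_tendsto_zero.mpr (by simpa using hlim)
    simpa using hb_lim.sub hdiff
  have hM_entry : Tendsto (fun t => u t i₀ * z t i₀) f (𝓝 1) := by
    simpa [vecMulVec_apply] using tendsto_pi_nhds.mp (tendsto_pi_nhds.mp hM_lim i₀) i₀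
  refine ⟨hb_lim, tendsto_of_tendsto_of_tendsto_of_le_of_le hM_entry tendsto_const_nhds
    (fun t => ?_) (fun t => abs_le_one_of_dotProduct_self_eq_one (hu t) i₀)⟩
  calc u t i₀ * z t i₀ ≤ |u t i₀| * |z t i₀| := (le_abs_self _).trans_eq (abs_mul _ _)
    _ ≤ |u t i₀| := mul_le_of_le_one_right (abs_nonneg _)
        (abs_le_one_of_dotProduct_self_eq_one (hz t) i₀)

end Matrix

theorem frobNorm_eq_norm {d : ℕ} (M : Matrix (Fin d) (Fin d) ℝ) : frobNorm M = ‖M‖ := by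
  rw [frobNorm, ← frobenius_norm_sq_eq_sum, Real.sqrt_sq (norm_nonneg _)]

theorem stmt3_general {d : ℕ} (hd : 1 ≤ d)
    (g k a l : ℕ → Matrix (Fin d) (Fin d) ℝ)
    (hdec : ∀ n, g n = k n * a n * l n)
    (hk : ∀ n, (k n)ᵀ * k n = 1) (hl : ∀ n, (l n)ᵀ * l n = 1)
    (hdiag : ∀ n, (a n).IsDiag)
    (hmono : ∀ n, ∀ i j : Fin d, i ≤ j → a n j j ≤ a n i i)
    (hpos : ∀ n, ∀ i : Fin d, 0 ≤ a n i i)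
    (hne : ∀ n, a n ≠ 0)
    (π : Matrix (Fin d) (Fin d) ℝ)
    (hlim : Tendsto (fun n => (frobNorm (g n))⁻¹ • g n) atTop (𝓝 π))
    (v : Fin d → ℝ) (hv : v ⬝ᵥ v = 1)
    (hspan : LinearMap.range π.mulVecLin = Submodule.span ℝ {v}) :
    Tendsto (fun n => (frobNorm (a n))⁻¹ • a n) atTop
        (𝓝 (Matrix.single (⟨0, hd⟩ : Fin d) (⟨0, hd⟩ : Fin d) (1 : ℝ))) ∧
      Tendsto (fun n => |∑ i, k n i (⟨0, hd⟩ : Fin d) * v i|) atTop (𝓝 1) := by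
  set i₀ : Fin d := ⟨0, hd⟩
  set b := fun n => (frobNorm (a n))⁻¹ • a n with hb
  have hnorm : ∀ n, ‖g n‖ = ‖a n‖ := fun n => by
    rw [hdec, frobenius_norm_mul_mul_of_orthogonal (hk n) (hl n)]
  have hkT : ∀ n, (k n)ᵀᵀ * (k n)ᵀ = 1 := fun n => by
    rw [transpose_transpose, mul_eq_one_comm, hk n]
  obtain ⟨w, rfl⟩ := exists_eq_vecMulVec_of_range_mulVecLin_eq_span hspan
  have hw : w ⬝ᵥ w = 1 := by
    have hπ : ‖vecMulVec v w‖ = 1 := by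
      refine tendsto_nhds_unique hlim.norm (tendsto_const_nhds.congr fun n => ?_)
      rw [frobNorm_eq_norm, norm_smul, norm_inv, norm_norm,
        inv_mul_cancel₀ (hnorm n ▸ norm_ne_zero_iff.mpr (hne n))]
    simpa [hπ, hv, eq_comm] using frobenius_norm_sub_vecMulVec_sq 0 v w
  have hconj : ∀ n, ‖b n - vecMulVec ((k n)ᵀ *ᵥ v) (l n *ᵥ w)‖ =
      ‖(frobNorm (g n))⁻¹ • g n - vecMulVec v w‖ := fun n => by
    rw [← frobenius_norm_mul_mul_of_orthogonal (hk n) (hl n), Matrix.mul_sub, Matrix.sub_mul,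
      Matrix.mul_smul, Matrix.smul_mul, ← hdec, mul_vecMulVec_mul, mulVec_mulVec, mulVec_mulVec,
      mul_eq_one_comm.mp (hk n), hl n, one_mulVec, one_mulVec, frobNorm_eq_norm,
      frobNorm_eq_norm, hnorm]
  have hmax : ∀ n i, |b n i i| ≤ b n i₀ i₀ := fun n i => by
    have hc : 0 ≤ (frobNorm (a n))⁻¹ := inv_nonneg.mpr (Real.sqrt_nonneg _)
    simp only [hb, Matrix.smul_apply, smul_eq_mul]
    rw [abs_of_nonneg (mul_nonneg hc (hpos n i))]
    exact mul_le_mul_of_nonneg_left (hmono n i₀ i (Fin.le_iff_val_le_val.mpr (Nat.zero_le _))) hc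
  exact tendsto_single_of_tendsto_norm_sub_vecMulVec (fun n => (hdiag n).smul _) hmax
    (fun n => by rw [mulVec_dotProduct_mulVec_self_of_orthogonal (hkT n), hv])
    (fun n => by rw [mulVec_dotProduct_mulVec_self_of_orthogonal (hl n), hw])
    ((tendsto_iff_norm_sub_tendsto_zero.mp hlim).congr fun n => (hconj n).symm)

/-- Deterministic core of Lemmas 2.2 and 2.10: if `gₙ = kₙ aₙ lₙ` are Cartan (singular value)
decompositions and `gₙ/‖gₙ‖` converges to a rank-one matrix `π` whose range is spanned by the
unit vector `v`, then `aₙ/‖aₙ‖ → E₀₀` and `|⟨kₙ e₀, v⟩| → 1`. -/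
theorem stmt3 {d : ℕ} (hd : 1 ≤ d)
    (g k a l : ℕ → Matrix (Fin d) (Fin d) ℝ)
    (hdec : ∀ n, g n = k n * a n * l n)
    (hk : ∀ n, (k n)ᵀ * k n = 1) (hl : ∀ n, (l n)ᵀ * l n = 1)
    (hdiag : ∀ n, (a n).IsDiag)
    (hmono : ∀ n, ∀ i j : Fin d, i ≤ j → a n j j ≤ a n i i)
    (hpos : ∀ n, ∀ i : Fin d, 0 ≤ a n i i)
    (hne : ∀ n, a n ≠ 0)
    (π : Matrix (Fin d) (Fin d) ℝ) (hrank : π.rank = 1)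
    (hlim : Tendsto (fun n => (frobNorm (g n))⁻¹ • g n) atTop (𝓝 π))
    (v : Fin d → ℝ) (hv : v ⬝ᵥ v = 1)
    (hspan : LinearMap.range π.mulVecLin = Submodule.span ℝ {v}) :
    Tendsto (fun n => (frobNorm (a n))⁻¹ • a n) atTop
        (𝓝 (Matrix.single (⟨0, hd⟩ : Fin d) (⟨0, hd⟩ : Fin d) (1 : ℝ))) ∧
      Tendsto (fun n => |∑ i, k n i (⟨0, hd⟩ : Fin d) * v i|) atTop (𝓝 1) :=
  stmt3_general hd g k a l hdec hk hl hdiag hmono hpos hne π hlim v hv hspan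
end

section
/- There exists a constant C > 0 such that for every x ∈ ℝ there exists δ > 0 such that for all s, t ∈ ℝ and all θ ∈ ℝ with |θ| ≤ δ: |s − t| ≤ C·log‖A(−s)·U(x)·R(θ)·A(t)‖ + C, where A(s) is the 2×2 real matrix with rows (e^s, 0) and (0, e^{−s}), U(x) is the 2×2 real matrix with rows (1, x) and (0, 1), R(θ) is the rotation matrix with rows (cos θ, −sin θ) and (sin θ, cos θ), and ‖·‖ denotes the Frobenius norm on 2×2 real matrices. -/
/-! Conjugating `U(x)·R(θ)` by the diagonal flow puts the factor `e^{t-s}` on the `(0,0)` entry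
and `e^{s-t}` on the `(1,1)` entry, next to `cos θ + x sin θ` and `cos θ`. For `θ` small in terms
of `x` both are at least `1/2`, so the Frobenius norm, which dominates every entry, is at least
`e^{|s-t|}/2 ≥ e^{|s-t|-1}`. -/

/-- The Frobenius norm of a real 2×2 matrix. -/
noncomputable def frobNorm2 (M : Matrix (Fin 2) (Fin 2) ℝ) : ℝ :=
  Real.sqrt (∑ i, ∑ j, (M i j) ^ 2)

open Real

lemma abs_apply_le_frobNorm2 (M : Matrix (Fin 2) (Fin 2) ℝ) (i j : Fin 2) :
    |M i j| ≤ frobNorm2 M :=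
  abs_le_sqrt <| calc
    M i j ^ 2 ≤ ∑ j', M i j' ^ 2 :=
      Finset.single_le_sum (fun _ _ => sq_nonneg _) (Finset.mem_univ j)
    _ ≤ ∑ i', ∑ j', M i' j' ^ 2 :=
      Finset.single_le_sum (f := fun i' => ∑ j', M i' j' ^ 2)
        (fun _ _ => Finset.sum_nonneg fun _ _ => sq_nonneg _) (Finset.mem_univ i)

lemma sub_one_le_log_frobNorm2 {M : Matrix (Fin 2) (Fin 2) ℝ} {i j : Fin 2} {u c : ℝ}
    (hM : M i j = exp u * c) (hc : 1 / 2 ≤ c) : u - 1 ≤ log (frobNorm2 M) := by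
  have he : exp (u - 1) ≤ |M i j| := calc
    exp (u - 1) = exp u / exp 1 := exp_sub u 1
    _ ≤ exp u / 2 := div_le_div_of_nonneg_left (exp_pos u).le two_pos
        (by linarith [add_one_le_exp 1])
    _ ≤ exp u * c := by
        rw [div_eq_mul_one_div]; exact mul_le_mul_of_nonneg_left hc (exp_pos u).le
    _ ≤ |M i j| := hM ▸ le_abs_self _
  have hF := he.trans (abs_apply_le_frobNorm2 M i j)
  exact (le_log_iff_exp_le ((exp_pos _).trans_le hF)).2 hF

lemma one_sub_le_cos_add_mul_sin (x θ : ℝ) :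
    1 - |θ| * (1 + |x|) ≤ cos θ + x * sin θ := by
  have hcos : 1 - |θ| ≤ cos θ := by
    have := abs_cos_sub_cos_le θ 0
    rw [cos_zero, sub_zero] at this
    linarith [neg_abs_le (cos θ - 1)]
  have hsin : -(|x| * |θ|) ≤ x * sin θ := calc
    -(|x| * |θ|) ≤ -(|x| * |sin θ|) :=
      neg_le_neg (mul_le_mul_of_nonneg_left abs_sin_le_abs (abs_nonneg x))
    _ ≤ x * sin θ := by rw [← abs_mul]; exact neg_abs_le _
  linarith

lemma diag_mul_unipotent_mul_rotation_mul_diag_apply_zero_zero (s x θ t : ℝ) :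
    (!![exp (-s), 0; 0, exp (-(-s))] * !![1, x; 0, 1] *
        !![cos θ, -sin θ; sin θ, cos θ] * !![exp t, 0; 0, exp (-t)]) 0 0 =
      exp (t - s) * (cos θ + x * sin θ) := by
  simp only [Matrix.mul_fin_two, Matrix.of_apply, Matrix.cons_val', Matrix.cons_val_zero,
    Matrix.empty_val', Matrix.cons_val_fin_one]
  rw [sub_eq_add_neg, exp_add]
  ring

lemma diag_mul_unipotent_mul_rotation_mul_diag_apply_one_one (s x θ t : ℝ) :
    (!![exp (-s), 0; 0, exp (-(-s))] * !![1, x; 0, 1] *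
        !![cos θ, -sin θ; sin θ, cos θ] * !![exp t, 0; 0, exp (-t)]) 1 1 =
      exp (s - t) * cos θ := by
  simp only [Matrix.mul_fin_two, Matrix.of_apply, Matrix.cons_val', Matrix.cons_val_one,
    Matrix.empty_val', Matrix.cons_val_fin_one, neg_neg]
  rw [sub_eq_add_neg, exp_add]
  ring

/-- Lemma 2.8 bis for `G = SL₂(ℝ)`: there is `C > 0` such that for every unipotent `U(x)` there
is a neighborhood `|θ| ≤ δ` of the identity rotation with
`|s − t| ≤ C·log‖A(−s)·U(x)·R(θ)·A(t)‖ + C` for all `s, t`. -/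
theorem stmt4 :
    ∃ C : ℝ, 0 < C ∧ ∀ x : ℝ, ∃ δ : ℝ, 0 < δ ∧ ∀ s t θ : ℝ, |θ| ≤ δ →
      |s - t| ≤ C * Real.log (frobNorm2
        (!![Real.exp (-s), 0; 0, Real.exp (-(-s))] *
          !![1, x; 0, 1] *
          !![Real.cos θ, -Real.sin θ; Real.sin θ, Real.cos θ] *
          !![Real.exp t, 0; 0, Real.exp (-t)])) + C := by
  refine ⟨1, one_pos, fun x => ⟨1 / (2 * (1 + |x|)), by positivity, fun s t θ hθ => ?_⟩⟩
  have hsmall : |θ| * (1 + |x|) ≤ 1 / 2 := by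
    rw [le_div_iff₀ (by positivity)] at hθ
    linarith
  have hrot : 1 / 2 ≤ cos θ + x * sin θ := by
    linarith [one_sub_le_cos_add_mul_sin x θ]
  have hcos : 1 / 2 ≤ cos θ := by
    have hθ' : |θ| ≤ 1 / 2 := by nlinarith [abs_nonneg x, abs_nonneg θ]
    simpa using (one_sub_le_cos_add_mul_sin 0 θ).trans' (by linarith)
  have h₀₀ := sub_one_le_log_frobNorm2
    (diag_mul_unipotent_mul_rotation_mul_diag_apply_zero_zero s x θ t) hrot
  have h₁₁ := sub_one_le_log_frobNorm2
    (diag_mul_unipotent_mul_rotation_mul_diag_apply_one_one s x θ t) hcos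
  rw [one_mul, abs_sub_le_iff]
  constructor <;> linarith
end
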